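/- Let K_h and K̄ be symmetric positive semidefinite n×n matrices, λ > 0, M = (K_h+λI)^{-1} − (K̄+λI)^{-1}, and Y ∈ ℝ^n with ‖Y‖₂ ≤ √n. Then Yᵀ(K_h+λI)^{-1}K_h(K_h+λI)^{-1}Y − Yᵀ(K̄+λI)^{-1}K̄(K̄+λI)^{-1}Y ≤ n(1 + λ‖M‖₂)‖M‖₂. -/

import Mathlib

open Matrix

/-- The spectral (ℓ²-operator) norm of a real square matrix. -/
noncomputable def spectralNormL2 {n : ℕ} (A : Matrix (Fin n) (Fin n) ℝ) : ℝ :=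
  ‖Matrix.toEuclideanCLM (𝕜 := ℝ) A‖

/-!
Write `R = (K + λ)⁻¹`. Then `R K R = R - λ R²`, and for any `a, b` in a real algebra
`(a - λ a²) - (b - λ b²) = ½ ((1 - 2λ a)(a - b) + (a - b)(1 - 2λ b))`.
Here `1 - 2λ R = (K - λ)(K + λ)⁻¹` is the Cayley transform of a positive semidefinite matrix, a
contraction because `‖(K + λ) y‖² - ‖(K - λ) y‖² = 4λ ⟪K y, y⟫ ≥ 0`. Hence the matrix of the
quadratic-form difference has spectral norm at most `‖M‖`, and the difference itself is at most
`‖M‖ ‖Y‖² ≤ n ‖M‖`.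
-/

open scoped RealInnerProductSpace in
theorem norm_sub_le_norm_add_of_inner_nonneg {F : Type*} [NormedAddCommGroup F]
    [InnerProductSpace ℝ F] {u v : F} (h : 0 ≤ ⟪u, v⟫) : ‖u - v‖ ≤ ‖u + v‖ := by
  refine sq_le_sq₀ (norm_nonneg _) (norm_nonneg _) |>.mp ?_
  rw [norm_sub_sq_real, norm_add_sq_real]
  linarith

theorem norm_sub_smul_mul_self_sub_le {R : Type*} [NormedRing R] [NormedAlgebra ℝ R]
    {a b : R} {c : ℝ} (ha : ‖1 - (2 * c) • a‖ ≤ 1) (hb : ‖1 - (2 * c) • b‖ ≤ 1) :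
    ‖(a - c • (a * a)) - (b - c • (b * b))‖ ≤ ‖a - b‖ := by
  have hsplit : (a - c • (a * a)) - (b - c • (b * b))
      = (2⁻¹ : ℝ) • ((1 - (2 * c) • a) * (a - b) + (a - b) * (1 - (2 * c) • b)) := by
    simp only [sub_mul, mul_sub, smul_sub, smul_add, smul_smul, smul_mul_assoc, mul_smul_comm,
      one_mul, mul_one]
    module
  rw [hsplit, norm_smul]
  calc ‖(2⁻¹ : ℝ)‖ * ‖(1 - (2 * c) • a) * (a - b) + (a - b) * (1 - (2 * c) • b)‖
      ≤ 2⁻¹ * (‖1 - (2 * c) • a‖ * ‖a - b‖ + ‖a - b‖ * ‖1 - (2 * c) • b‖) := by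
        rw [Real.norm_of_nonneg (by norm_num)]
        gcongr
        exact (norm_add_le _ _).trans (add_le_add (norm_mul_le _ _) (norm_mul_le _ _))
    _ ≤ 2⁻¹ * (1 * ‖a - b‖ + ‖a - b‖ * 1) := by gcongr
    _ = ‖a - b‖ := by ring

namespace Matrix

variable {n : Type*} [Fintype n] [DecidableEq n]

theorem inv_mul_mul_inv_eq_inv_sub_smul {R : Type*} [CommRing R] {K : Matrix n n R} {c : R}
    (h : IsUnit (K + c • 1).det) :
    (K + c • 1)⁻¹ * K * (K + c • 1)⁻¹
      = (K + c • 1)⁻¹ - c • ((K + c • 1)⁻¹ * (K + c • 1)⁻¹) := by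
  set P := K + c • 1
  have hK : K = P - c • 1 := by simp [P]
  conv_lhs => rw [hK]
  rw [Matrix.mul_sub, nonsing_inv_mul _ h, Matrix.sub_mul, one_mul, Matrix.mul_smul, mul_one,
    Matrix.smul_mul]

theorem PosSemidef.isUnit_det_add_smul_one {K : Matrix n n ℝ} (hK : K.PosSemidef) {c : ℝ}
    (hc : 0 < c) : IsUnit (K + c • 1).det :=
  (isUnit_iff_isUnit_det _).mp (PosDef.posSemidef_add hK (PosDef.one.smul hc)).isUnit

open scoped Matrix.Norms.L2Operator RealInnerProductSpace

theorem dotProduct_mulVec_le_l2_opNorm_mul (A : Matrix n n ℝ) (x : n → ℝ) :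
    x ⬝ᵥ A *ᵥ x ≤ ‖A‖ * ‖WithLp.toLp 2 x‖ ^ 2 := by
  calc x ⬝ᵥ A *ᵥ x = ⟪WithLp.toLp 2 x, toEuclideanCLM (𝕜 := ℝ) A (WithLp.toLp 2 x)⟫ :=
        (inner_toEuclideanCLM _ _ _).symm
    _ ≤ ‖WithLp.toLp 2 x‖ * (‖A‖ * ‖WithLp.toLp 2 x‖) :=
        (real_inner_le_norm _ _).trans (by gcongr; exact (toEuclideanCLM (𝕜 := ℝ) A).le_opNorm _)
    _ = ‖A‖ * ‖WithLp.toLp 2 x‖ ^ 2 := by ring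

theorem PosSemidef.l2_opNorm_one_sub_smul_inv_le_one {K : Matrix n n ℝ} (hK : K.PosSemidef)
    {c : ℝ} (hc : 0 < c) : ‖1 - (2 * c) • (K + c • 1)⁻¹‖ ≤ 1 := by
  have hP := hK.isUnit_det_add_smul_one hc
  have hcayley : 1 - (2 * c) • (K + c • 1)⁻¹ = (K - c • 1) * (K + c • 1)⁻¹ := by
    have : K - c • 1 = (K + c • 1) - (2 * c) • 1 := by module
    rw [this, Matrix.sub_mul, mul_nonsing_inv _ hP, Matrix.smul_mul, one_mul]
  rw [hcayley, ← l2_opNorm_toEuclideanCLM]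
  refine ContinuousLinearMap.opNorm_le_bound _ zero_le_one fun x => ?_
  set T := toEuclideanCLM (𝕜 := ℝ) K
  set y := toEuclideanCLM (𝕜 := ℝ) (K + c • 1)⁻¹ x
  have hx : T y + c • y = x := by
    calc T y + c • y = toEuclideanCLM (𝕜 := ℝ) (K + c • 1) y := by simp [T]
      _ = toEuclideanCLM (𝕜 := ℝ) ((K + c • 1) * (K + c • 1)⁻¹) x := by rw [map_mul]; rfl
      _ = x := by rw [mul_nonsing_inv _ hP, map_one]; rfl
  have hKy : 0 ≤ ⟪T y, c • y⟫ := by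
    rw [real_inner_smul_right, real_inner_comm, inner_toEuclideanCLM]
    exact mul_nonneg hc.le (by simpa using hK.dotProduct_mulVec_nonneg (WithLp.ofLp y))
  calc ‖toEuclideanCLM (𝕜 := ℝ) ((K - c • 1) * (K + c • 1)⁻¹) x‖ = ‖T y - c • y‖ := by
        rw [map_mul]; simp [T, y]
    _ ≤ ‖T y + c • y‖ := norm_sub_le_norm_add_of_inner_nonneg hKy
    _ = 1 * ‖x‖ := by rw [one_mul, hx]

end Matrix

/-- Quadratic form difference bound:
`Yᵀ(K_h+λI)⁻¹K_h(K_h+λI)⁻¹Y − Yᵀ(K̄+λI)⁻¹K̄(K̄+λI)⁻¹Y ≤ n(1 + λ‖M‖₂)‖M‖₂`. -/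
theorem quadratic_form_difference_bound
    (n : ℕ) (Kh Kbar : Matrix (Fin n) (Fin n) ℝ)
    (hKh : Kh.PosSemidef) (hKbar : Kbar.PosSemidef)
    (lam : ℝ) (hlam : 0 < lam)
    (Y : Fin n → ℝ) (hY : Real.sqrt (∑ i, (Y i) ^ 2) ≤ Real.sqrt n) :
    Y ⬝ᵥ (((Kh + lam • (1 : Matrix (Fin n) (Fin n) ℝ))⁻¹ * Kh *
            (Kh + lam • (1 : Matrix (Fin n) (Fin n) ℝ))⁻¹) *ᵥ Y)
      - Y ⬝ᵥ (((Kbar + lam • (1 : Matrix (Fin n) (Fin n) ℝ))⁻¹ * Kbar *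
            (Kbar + lam • (1 : Matrix (Fin n) (Fin n) ℝ))⁻¹) *ᵥ Y)
    ≤ n * (1 + lam * spectralNormL2 ((Kh + lam • (1 : Matrix (Fin n) (Fin n) ℝ))⁻¹
            - (Kbar + lam • (1 : Matrix (Fin n) (Fin n) ℝ))⁻¹))
        * spectralNormL2 ((Kh + lam • (1 : Matrix (Fin n) (Fin n) ℝ))⁻¹
            - (Kbar + lam • (1 : Matrix (Fin n) (Fin n) ℝ))⁻¹) := by
  open scoped Matrix.Norms.L2Operator in
  set A := (Kh + lam • (1 : Matrix (Fin n) (Fin n) ℝ))⁻¹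
  set B := (Kbar + lam • (1 : Matrix (Fin n) (Fin n) ℝ))⁻¹
  have hM : spectralNormL2 (A - B) = ‖A - B‖ := rfl
  have hD : ‖A * Kh * A - B * Kbar * B‖ ≤ ‖A - B‖ := by
    rw [inv_mul_mul_inv_eq_inv_sub_smul (hKh.isUnit_det_add_smul_one hlam),
      inv_mul_mul_inv_eq_inv_sub_smul (hKbar.isUnit_det_add_smul_one hlam)]
    exact norm_sub_smul_mul_self_sub_le (hKh.l2_opNorm_one_sub_smul_inv_le_one hlam)
      (hKbar.l2_opNorm_one_sub_smul_inv_le_one hlam)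
  have hYn : ‖WithLp.toLp 2 Y‖ ^ 2 ≤ n := by
    rw [EuclideanSpace.norm_eq, Real.sq_sqrt (by positivity)]
    simpa [Real.sqrt_le_sqrt_iff] using hY
  rw [hM]
  calc Y ⬝ᵥ (A * Kh * A) *ᵥ Y - Y ⬝ᵥ (B * Kbar * B) *ᵥ Y
      = Y ⬝ᵥ (A * Kh * A - B * Kbar * B) *ᵥ Y := by rw [sub_mulVec, dotProduct_sub]
    _ ≤ ‖A * Kh * A - B * Kbar * B‖ * ‖WithLp.toLp 2 Y‖ ^ 2 :=
        dotProduct_mulVec_le_l2_opNorm_mul _ _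
    _ ≤ ‖A - B‖ * n := by gcongr
    _ ≤ n * (1 + lam * ‖A - B‖) * ‖A - B‖ := by
        nlinarith [mul_nonneg (mul_nonneg (Nat.cast_nonneg n) hlam.le) (mul_self_nonneg ‖A - B‖)]
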